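/- If N' is a vertex cover of G̃ with |N'| ≤ C, then the set S consisting of the node-vertices corresponding to N' together with all edge-vertices is a feasible set in the reduction instance, and its cost equals |N'|, hence is at most C. -/

import Mathlib

open Finset

/-- The graph `Ĝ` of the reduction: vertices are node-vertices (`Sum.inl`) and
edge-vertices (`Sum.inr`); node-vertices form a clique, a node-vertex is adjacent to an
edge-vertex iff it is an endpoint of that edge, and edge-vertices are pairwise
nonadjacent. -/
def hatG {N : Type*} (G : SimpleGraph N) : SimpleGraph (N ⊕ G.edgeSet) where
  Adj x y :=
    match x, y with
    | Sum.inl i, Sum.inl j => i ≠ j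
    | Sum.inl i, Sum.inr e => i ∈ (e : Sym2 N)
    | Sum.inr e, Sum.inl i => i ∈ (e : Sym2 N)
    | Sum.inr _, Sum.inr _ => False
  symm := by
    constructor
    rintro (i | e) (j | e') h <;> simp_all
    all_goals exact fun h' => h h'.symm
  loopless := by
    constructor
    rintro (i | e) h <;> simp_all

/-- A set of vertices of `Ĝ` is feasible if it induces a connected subgraph and
satisfies the demand constraint: it contains at least `|Ẽ|` edge-vertices. -/
def RFeasible {N : Type*} [Fintype N] [DecidableEq N] (G : SimpleGraph N)
    [DecidableRel G.Adj] (S : Finset (N ⊕ G.edgeSet)) : Prop :=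
  ((hatG G).induce (S : Set (N ⊕ G.edgeSet))).Connected ∧
    G.edgeFinset.card ≤ (S.filter (fun x => x.isRight = true)).card

/-- The cost of a set of vertices of `Ĝ` is its number of node-vertices. -/
def rcost {N : Type*} [Fintype N] [DecidableEq N] (G : SimpleGraph N)
    [DecidableRel G.Adj] (S : Finset (N ⊕ G.edgeSet)) : ℕ :=
  (S.filter (fun x => x.isLeft = true)).card

/-- `N'` is a vertex cover of `G`: every edge of `G` has an endpoint in `N'`. -/
def IsVertexCover {N : Type*} (G : SimpleGraph N) (N' : Finset N) : Prop :=
  ∀ e ∈ G.edgeSet, ∃ i ∈ N', i ∈ e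

/-! The node-vertices of a vertex cover form a clique of `Ĝ` to which every edge-vertex is
adjacent, so together with all edge-vertices they induce a connected subgraph; the demand
constraint holds because every edge-vertex is taken, and the cost counts exactly the cover. -/

namespace SimpleGraph

variable {V : Type*} {G : SimpleGraph V}

theorem induce_connected_of_dominating_clique {s k : Set V} (hks : k ⊆ s)
    (hk : G.IsClique k) (hne : k.Nonempty) (hdom : ∀ v ∈ s \ k, ∃ u ∈ k, G.Adj u v) :
    (G.induce s).Connected := by
  obtain ⟨u, hu⟩ := hne
  have reach_clique :
      ∀ w (hw : w ∈ k), (G.induce s).Reachable ⟨u, hks hu⟩ ⟨w, hks hw⟩ := by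
    intro w hw
    by_cases huw : u = w
    · subst huw; rfl
    · exact Adj.reachable (induce_adj.mpr (hk hu hw huw))
  refine connected_iff_exists_forall_reachable _ |>.mpr ⟨⟨u, hks hu⟩, ?_⟩
  rintro ⟨v, hv⟩
  by_cases hvk : v ∈ k
  · exact reach_clique v hvk
  · obtain ⟨w, hw, hwv⟩ := hdom v ⟨hv, hvk⟩
    exact (reach_clique w hw).trans (Adj.reachable (induce_adj.mpr hwv))

end SimpleGraph

section Reduction

variable {N : Type*} {G : SimpleGraph N}

theorem IsVertexCover.nonempty {N' : Finset N} (hvc : IsVertexCover G N')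
    (hE : G.edgeSet.Nonempty) : N'.Nonempty := by
  obtain ⟨e, he⟩ := hE
  obtain ⟨i, hi, -⟩ := hvc e he
  exact ⟨i, hi⟩

theorem hatG_isClique_image_inl (s : Set N) : (hatG G).IsClique (Sum.inl '' s) := by
  rintro _ ⟨i, -, rfl⟩ _ ⟨j, -, rfl⟩ hij
  exact fun h => hij (congrArg Sum.inl h)

theorem hatG_induce_connected_of_isVertexCover [Fintype N] [DecidableEq N]
    [DecidableRel G.Adj] {N' : Finset N} (hvc : IsVertexCover G N') (hN' : N'.Nonempty) :
    ((hatG G).induce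
      (↑(N'.image Sum.inl ∪ (univ : Finset G.edgeSet).image Sum.inr) : Set _)).Connected := by
  refine SimpleGraph.induce_connected_of_dominating_clique (k := Sum.inl '' (N' : Set N))
    (by simp) (hatG_isClique_image_inl _) (hN'.to_set.image _) ?_
  rintro (i | e) ⟨hvS, hv⟩
  · simp_all
  · obtain ⟨i, hi, hie⟩ := hvc e e.2
    exact ⟨Sum.inl i, ⟨i, hi, rfl⟩, hie⟩

end Reduction

section SumFilter

variable {α β : Type*} [DecidableEq α] [DecidableEq β] (s : Finset α) (t : Finset β)

theorem card_filter_isLeft_image_inl_union_image_inr :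
    #((s.image Sum.inl ∪ t.image Sum.inr).filter (fun x => x.isLeft = true)) = #s := by
  have : (s.image Sum.inl ∪ t.image Sum.inr).filter (fun x => x.isLeft = true) =
      s.image Sum.inl := by
    ext (a | b) <;> simp
  rw [this, card_image_of_injective _ Sum.inl_injective]

theorem card_filter_isRight_image_inl_union_image_inr :
    #((s.image Sum.inl ∪ t.image Sum.inr).filter (fun x => x.isRight = true)) = #t := by
  have : (s.image Sum.inl ∪ t.image Sum.inr).filter (fun x => x.isRight = true) =
      t.image Sum.inr := by
    ext (a | b) <;> simp
  rw [this, card_image_of_injective _ Sum.inr_injective]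

end SumFilter

/-- If `N'` is a vertex cover of `G̃` with `|N'| ≤ C`, then the node-vertices of
`N'` together with all edge-vertices form a feasible set of the reduction instance
whose cost equals `|N'|`, hence is at most `C`. -/
theorem feasible_of_vertexCover {N : Type*} [Fintype N] [DecidableEq N]
    (G : SimpleGraph N) [DecidableRel G.Adj]
    (hE : G.edgeFinset.Nonempty)
    (N' : Finset N) (hvc : IsVertexCover G N') (C : ℕ) (hC : N'.card ≤ C) :
    RFeasible G (N'.image Sum.inl ∪ (univ : Finset G.edgeSet).image Sum.inr) ∧
      rcost G (N'.image Sum.inl ∪ (univ : Finset G.edgeSet).image Sum.inr) = N'.card ∧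
      rcost G (N'.image Sum.inl ∪ (univ : Finset G.edgeSet).image Sum.inr) ≤ C := by
  have hN' : N'.Nonempty := hvc.nonempty (by simpa using hE)
  have hcost : rcost G (N'.image Sum.inl ∪ (univ : Finset G.edgeSet).image Sum.inr) = #N' :=
    card_filter_isLeft_image_inl_union_image_inr _ _
  refine ⟨⟨hatG_induce_connected_of_isVertexCover hvc hN', ?_⟩, hcost, hcost ▸ hC⟩
  rw [card_filter_isRight_image_inl_union_image_inr, card_univ, SimpleGraph.edgeFinset_card]
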